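/- Cancellation identity between the cross-derivative term and the selection drift (Appendix D): Fix K ≥ 2 and a symmetric matrix σ ∈ ℝ^{K×K} with σ_{K,K} = 0. For every continuously differentiable function f on (a neighborhood of) the interior of the simplex Δ_{K-1} and every x in the interior of Δ_{K-1}: Σ_{i,j=1}^{K-1} x_i (δ_{i,j} − x_j) [∂/∂x_i e^{−σ̄(x)/2}] [∂f/∂x_j (x)] + e^{−σ̄(x)/2} Σ_{i=1}^{K-1} x_i (σ_i(x) − σ̄(x)) ∂f/∂x_i (x) = 0. -/

import Mathlib

open MeasureTheory Filter

noncomputable section WrightFisher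

/-- The modified Jacobi polynomial `R_n^{(a,b)}`. -/
def modJacobi (a b : ℝ) (n : ℕ) (x : ℝ) : ℝ :=
  ∑ s ∈ Finset.range (n + 1),
    (Real.Gamma ((n : ℝ) + b) / (Real.Gamma ((n : ℝ) - (s : ℝ) + 1) * Real.Gamma (b + (s : ℝ)))) *
      (Real.Gamma ((n : ℝ) + a) / (Real.Gamma ((s : ℝ) + 1) * Real.Gamma (a + (n : ℝ) - (s : ℝ)))) *
      (x - 1) ^ s * x ^ (n - s)

/-- The norming constant `c_n^{(a,b)}`. -/
def cConst (a b : ℝ) (n : ℕ) : ℝ :=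
  Real.Gamma ((n : ℝ) + a) * Real.Gamma ((n : ℝ) + b) /
    ((2 * (n : ℝ) + a + b - 1) * Real.Gamma ((n : ℝ) + a + b - 1) * Real.Gamma ((n : ℝ) + 1))

/-- Inclusion of `Fin (K-1)` into `Fin K`. -/
def idx (K : ℕ) (j : Fin (K - 1)) : Fin K := Fin.castLE (Nat.sub_le K 1) j

/-- `N_j = Σ_{i>j} n_i`. -/
def Nsum (K : ℕ) (n : Fin (K - 1) → ℕ) (j : Fin (K - 1)) : ℕ :=
  ∑ i ∈ Finset.univ.filter (fun i => j < i), n i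

/-- `Θ_j = Σ_{i=j+1}^{K} θ_i` (0-indexed: sum of `θ i` for `i > j`). -/
def Tsum (K : ℕ) (θ : Fin K → ℝ) (j : Fin (K - 1)) : ℝ :=
  ∑ i ∈ Finset.univ.filter (fun i : Fin K => (j : ℕ) < (i : ℕ)), θ i

/-- `Σ_{i<j} x_i`. -/
def partialSum (K : ℕ) (x : Fin (K - 1) → ℝ) (j : Fin (K - 1)) : ℝ :=
  ∑ i ∈ Finset.univ.filter (fun i => i < j), x i

/-- The multivariate Jacobi polynomial `P_n^θ`. -/
def JacobiP (K : ℕ) (θ : Fin K → ℝ) (n : Fin (K - 1) → ℕ) (x : Fin (K - 1) → ℝ) : ℝ :=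
  ∏ j : Fin (K - 1),
    (1 - x j / (1 - partialSum K x j)) ^ (Nsum K n j) *
      modJacobi (θ (idx K j)) (Tsum K θ j + 2 * (Nsum K n j : ℝ)) (n j)
        (x j / (1 - partialSum K x j))

/-- Extend `x ∈ ℝ^{K-1}` to all `K` allele frequencies, `x_K := 1 - Σ x_i`. -/
def extendFreq (K : ℕ) (x : Fin (K - 1) → ℝ) (i : Fin K) : ℝ :=
  if h : (i : ℕ) < K - 1 then x ⟨i, h⟩ else 1 - ∑ j, x j

/-- The unnormalized Dirichlet density `Π_0`. -/
def Pi0 (K : ℕ) (θ : Fin K → ℝ) (x : Fin (K - 1) → ℝ) : ℝ :=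
  ∏ i : Fin K, extendFreq K x i ^ (θ i - 1)

/-- The norming constant `C_n^θ`. -/
def CConst (K : ℕ) (θ : Fin K → ℝ) (n : Fin (K - 1) → ℕ) : ℝ :=
  ∏ j : Fin (K - 1), cConst (θ (idx K j)) (Tsum K θ j + 2 * (Nsum K n j : ℝ)) (n j)

/-- Interior of the simplex `Δ_{K-1}`. -/
def simplexInt (K : ℕ) : Set (Fin (K - 1) → ℝ) :=
  {x | (∀ i, 0 < x i) ∧ ∑ i, x i < 1}

/-- Open unit cube `(0,1)^{K-1}`. -/
def openCube (K : ℕ) : Set (Fin (K - 1) → ℝ) :=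
  {ξ | ∀ i, ξ i ∈ Set.Ioo (0 : ℝ) 1}

/-- The stick-breaking map `T(ξ)_i = ξ_i Π_{j<i}(1-ξ_j)`. -/
def stickBreak (K : ℕ) (ξ : Fin (K - 1) → ℝ) : Fin (K - 1) → ℝ :=
  fun i => ξ i * ∏ j ∈ Finset.univ.filter (fun j => j < i), (1 - ξ j)

/-- Inverse of the stick-breaking map, `S(x)_i = x_i / (1 - Σ_{j<i} x_j)`. -/
def stickBreakInv (K : ℕ) (x : Fin (K - 1) → ℝ) : Fin (K - 1) → ℝ :=
  fun i => x i / (1 - partialSum K x i)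

/-- Partial derivative `∂f/∂x_i`. -/
def pd (K : ℕ) (f : (Fin (K - 1) → ℝ) → ℝ) (i : Fin (K - 1)) (x : Fin (K - 1) → ℝ) : ℝ :=
  fderiv ℝ f x (Pi.single i 1)

/-- `|θ| = Σ θ_i`. -/
def thetaTot (K : ℕ) (θ : Fin K → ℝ) : ℝ := ∑ i, θ i

/-- The neutral Wright-Fisher generator `L_0`. -/
def L0 (K : ℕ) (θ : Fin K → ℝ) (f : (Fin (K - 1) → ℝ) → ℝ) (x : Fin (K - 1) → ℝ) : ℝ :=
  (1 / 2) * ∑ i, ∑ j, x i * ((if i = j then (1 : ℝ) else 0) - x j) * pd K (pd K f j) i x +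
    (1 / 2) * ∑ i, (θ (idx K i) - thetaTot K θ * x i) * pd K f i x

/-- Marginal fitness `σ_i(x)`. -/
def margFit (K : ℕ) (σ : Fin K → Fin K → ℝ) (x : Fin (K - 1) → ℝ) (i : Fin K) : ℝ :=
  ∑ j, σ i j * extendFreq K x j

/-- Mean fitness `σ̄(x)`. -/
def meanFit (K : ℕ) (σ : Fin K → Fin K → ℝ) (x : Fin (K - 1) → ℝ) : ℝ :=
  ∑ i, ∑ j, σ i j * extendFreq K x i * extendFreq K x j

/-- The selection part `L_σ` of the generator. -/
def Lsel (K : ℕ) (σ : Fin K → Fin K → ℝ) (f : (Fin (K - 1) → ℝ) → ℝ)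
    (x : Fin (K - 1) → ℝ) : ℝ :=
  ∑ i, x i * (margFit K σ x (idx K i) - meanFit K σ x) * pd K f i x

/-- The full generator `L = L_0 + L_σ`. -/
def Lfull (K : ℕ) (θ : Fin K → ℝ) (σ : Fin K → Fin K → ℝ) (f : (Fin (K - 1) → ℝ) → ℝ)
    (x : Fin (K - 1) → ℝ) : ℝ :=
  L0 K θ f x + Lsel K σ f x

/-- The polynomial `Q(x; σ, θ)`. -/
def Qpoly (K : ℕ) (θ : Fin K → ℝ) (σ : Fin K → Fin K → ℝ) (x : Fin (K - 1) → ℝ) : ℝ :=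
  (1 / 2) * (∑ i, extendFreq K x i * margFit K σ x i ^ 2
    + ∑ i, θ i * margFit K σ x i
    + ∑ i, extendFreq K x i * σ i i
    - (1 + thetaTot K θ) * meanFit K σ x
    - meanFit K σ x ^ 2)

/-- Neutral eigenvalue `λ^θ_{|n|} = |n|(|n|-1+|θ|)/2`. -/
def lamNeutral (K : ℕ) (θ : Fin K → ℝ) (n : Fin (K - 1) → ℕ) : ℝ :=
  (1 / 2) * (∑ j, (n j : ℝ)) * ((∑ j, (n j : ℝ)) - 1 + thetaTot K θ)

/-- Recurrence constants `G^{(a,b)}_{n,m}`. -/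
def Gc (a b : ℝ) (n m : ℕ) : ℝ :=
  if n = m + 1 then
    ((n : ℝ) + a - 1) * ((n : ℝ) + b - 1) /
      ((2 * (n : ℝ) + a + b - 1) * (2 * (n : ℝ) + a + b - 2))
  else if n = m then
    (if n = 0 then a / (a + b)
     else 1 / 2 - (b - a) * (a + b - 2) / (2 * (2 * (n : ℝ) + a + b) * (2 * (n : ℝ) + a + b - 2)))
  else if m = n + 1 then
    ((n : ℝ) + 1) * ((n : ℝ) + a + b - 1) / ((2 * (n : ℝ) + a + b) * (2 * (n : ℝ) + a + b - 1))
  else 0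

/-- Recurrence constants `H^{(a,b)}_{n,m}`. -/
def Hc (a b : ℝ) (n m : ℕ) : ℝ :=
  if m = n then
    ((n : ℝ) + a + b - 1) * ((n : ℝ) + a + b) /
      ((2 * (n : ℝ) + a + b - 1) * (2 * (n : ℝ) + a + b))
  else if n = m + 1 then
    (if n = 1 then -2 * a / (a + b + 2)
     else if 1 < n then
       -2 * ((n : ℝ) + a - 1) * ((n : ℝ) + a + b - 1) /
         ((2 * (n : ℝ) + a + b - 2) * (2 * (n : ℝ) + a + b))
     else 0)
  else if n = m + 2 then
    (if 1 < n then
       ((n : ℝ) + a - 2) * ((n : ℝ) + a - 1) /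
         ((2 * (n : ℝ) + a + b - 2) * (2 * (n : ℝ) + a + b - 1))
     else 0)
  else 0

/-- Recurrence constants `I^{(a,b)}_{n,m}`. -/
def Ic (a b : ℝ) (n m : ℕ) : ℝ :=
  if m = n + 1 then
    (if n = 0 then -1 / (a + b)
     else -(((n : ℝ) + 1) * ((n : ℝ) + a + b - 1)) /
       ((2 * (n : ℝ) + a + b - 1) * (2 * (n : ℝ) + a + b)))
  else if m = n then
    (if n = 0 then b / (a + b)
     else if n = 1 then (b ^ 2 + a * (b + 2)) / ((a + b) * (a + b + 2))
     else (b ^ 2 + 2 * (n : ℝ) * ((n : ℝ) + a - 1) + b * (2 * (n : ℝ) + a - 2)) /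
       ((2 * (n : ℝ) + a + b - 2) * (2 * (n : ℝ) + a + b)))
  else if n = m + 1 then
    (if n = 1 then -(a * b) / ((a + b) * (a + b + 1))
     else -(((n : ℝ) + a - 1) * ((n : ℝ) + b - 1)) /
       ((2 * (n : ℝ) + a + b - 2) * (2 * (n : ℝ) + a + b - 1)))
  else 0

/-- Recurrence constants `J^{(a,b)}_{n,m}`. -/
def Jc (a b : ℝ) (n m : ℕ) : ℝ :=
  if m = n then
    (if n = 0 then (b - 1) * (b - 2) / ((a + b - 1) * (a + b - 2))
     else ((n : ℝ) + b - 2) * ((n : ℝ) + b - 1) /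
       ((2 * (n : ℝ) + a + b - 2) * (2 * (n : ℝ) + a + b - 1)))
  else if m = n + 1 then
    -2 * ((n : ℝ) + 1) * ((n : ℝ) + b - 1) / ((2 * (n : ℝ) + a + b - 2) * (2 * (n : ℝ) + a + b))
  else if m = n + 2 then
    ((n : ℝ) + 1) * ((n : ℝ) + 2) / ((2 * (n : ℝ) + a + b - 1) * (2 * (n : ℝ) + a + b))
  else 0

/-- The index set `M_i(n)`. -/
def indexSet (K : ℕ) (i : Fin (K - 1)) (n : Fin (K - 1) → ℕ) : Set (Fin (K - 1) → ℕ) :=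
  {m | (∀ j, i < j → Nsum K m j = Nsum K n j) ∧
       (∀ j, j ≤ i → |(Nsum K m j : ℤ) - (Nsum K n j : ℤ)| ≤ 1)}

/-- The explicit recurrence coefficient `r^{(θ,i)}_{n,m}`. -/
def rCoeff (K : ℕ) (θ : Fin K → ℝ) (i : Fin (K - 1)) (n m : Fin (K - 1) → ℕ) : ℝ :=
  Gc (θ (idx K i)) (Tsum K θ i + 2 * (Nsum K n i : ℝ)) (n i) (m i) *
    ∏ j ∈ Finset.univ.filter (fun j => j < i),
      (if Nsum K m j = Nsum K n j + 1 then
         Hc (θ (idx K j)) (Tsum K θ j + 2 * (Nsum K n j : ℝ)) (n j) (m j)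
       else if Nsum K m j = Nsum K n j then
         Ic (θ (idx K j)) (Tsum K θ j + 2 * (Nsum K n j : ℝ)) (n j) (m j)
       else if Nsum K n j = Nsum K m j + 1 then
         Jc (θ (idx K j)) (Tsum K θ j + 2 * (Nsum K n j : ℝ)) (n j) (m j)
       else 0)

/-- `Θ_{i-1} = Σ_{l=i}^K θ_l` (0-indexed: sum of `θ l` for `l ≥ i`). -/
def ThetaGe (K : ℕ) (θ : Fin K → ℝ) (i : Fin (K - 1)) : ℝ :=
  ∑ l ∈ Finset.univ.filter (fun l : Fin K => (i : ℕ) ≤ (l : ℕ)), θ l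

end WrightFisher

/-! Write `g = e^{-σ̄/2}`. Moving along `eᵢ` in the coordinates `x₁, …, x_{K-1}` moves the full
frequency vector along `eᵢ - e_K`, so symmetry of `σ` gives `∂ᵢ g = -g (σᵢ - σ_K)`. Since
`Σ_{a ≤ K} x_a σ_a = σ̄` and `Σ_{a ≤ K} x_a = 1`, this yields `Σᵢ xᵢ ∂ᵢ g = -g (σ̄ - σ_K)`, hence
`Σᵢ xᵢ (δᵢⱼ - xⱼ) ∂ᵢ g = xⱼ (∂ⱼ g - Σᵢ xᵢ ∂ᵢ g) = -g xⱼ (σⱼ - σ̄)`, which is minus the selection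
drift coefficient of `∂ⱼ f`. -/

open Matrix

theorem sum_sum_mul_ite_sub_mul {ι R : Type*} [Fintype ι] [DecidableEq ι] [CommRing R]
    (x a b : ι → R) :
    ∑ i, ∑ j, x i * ((if i = j then (1 : R) else 0) - x j) * a i * b j =
      ∑ j, x j * (a j - ∑ i, x i * a i) * b j := by
  simp only [mul_sub, sub_mul, Finset.sum_sub_distrib, mul_ite, mul_one, mul_zero, ite_mul,
    zero_mul, Finset.sum_ite_eq, Finset.mem_univ, if_true, Finset.sum_mul, Finset.mul_sum]
  rw [Finset.sum_comm]
  congr 1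
  exact Finset.sum_congr rfl fun _ _ => Finset.sum_congr rfl fun _ _ => by ring

theorem Matrix.IsSymm.hasDerivAt_dotProduct_mulVec_line {ι : Type*} [Fintype ι]
    {A : Matrix ι ι ℝ} (hA : A.IsSymm) (p d : ι → ℝ) :
    HasDerivAt (fun t : ℝ => (p + t • d) ⬝ᵥ A *ᵥ (p + t • d)) (2 * (d ⬝ᵥ A *ᵥ p)) 0 := by
  have hcomm : p ⬝ᵥ A *ᵥ d = d ⬝ᵥ A *ᵥ p := by
    rw [dotProduct_mulVec, dotProduct_comm, ← mulVec_transpose, hA.eq]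
  have hexpand : (fun t : ℝ => (p + t • d) ⬝ᵥ A *ᵥ (p + t • d)) =
      fun t => p ⬝ᵥ A *ᵥ p + t * (2 * (d ⬝ᵥ A *ᵥ p)) + t ^ 2 * (d ⬝ᵥ A *ᵥ d) := by
    ext t
    simp only [mulVec_add, mulVec_smul, add_dotProduct, dotProduct_add, smul_dotProduct,
      dotProduct_smul, smul_eq_mul, hcomm]
    ring
  rw [hexpand]
  exact ((((hasDerivAt_id (0 : ℝ)).mul_const _).const_add _).add
    ((hasDerivAt_pow 2 (0 : ℝ)).mul_const _)).congr_deriv (by simp)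

section SimplexCoordinates

variable {n : ℕ}

@[fun_prop]
theorem differentiable_extendFreq (K : ℕ) (a : Fin K) :
    Differentiable ℝ (fun y : Fin (K - 1) → ℝ => extendFreq K y a) := by
  unfold extendFreq; split_ifs <;> fun_prop

@[fun_prop]
theorem differentiable_meanFit (K : ℕ) (σ : Fin K → Fin K → ℝ) :
    Differentiable ℝ (meanFit K σ) := by
  unfold meanFit; fun_prop

theorem margFit_eq_mulVec (K : ℕ) (σ : Fin K → Fin K → ℝ) (y : Fin (K - 1) → ℝ) :
    margFit K σ y = σ *ᵥ extendFreq K y := rfl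

theorem meanFit_eq_dotProduct (K : ℕ) (σ : Fin K → Fin K → ℝ) (y : Fin (K - 1) → ℝ) :
    meanFit K σ y = extendFreq K y ⬝ᵥ margFit K σ y := by
  simp only [meanFit, margFit, dotProduct, Finset.mul_sum]
  exact Finset.sum_congr rfl fun _ _ => Finset.sum_congr rfl fun _ _ => by ring

theorem extendFreq_castSucc (y : Fin n → ℝ) (i : Fin n) :
    extendFreq (n + 1) y i.castSucc = y i := by
  simp [extendFreq]

theorem extendFreq_last (y : Fin n → ℝ) :
    extendFreq (n + 1) y (Fin.last n) = 1 - ∑ i, y i := by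
  simp [extendFreq]

theorem extendFreq_add_smul_single (y : Fin n → ℝ) (i : Fin n) (t : ℝ) :
    extendFreq (n + 1) (y + t • Pi.single i 1) =
      extendFreq (n + 1) y + t • (Pi.single i.castSucc 1 - Pi.single (Fin.last n) 1) := by
  ext a
  induction a using Fin.lastCases with
  | last => simp [extendFreq_last, Finset.sum_add_distrib, ← Finset.mul_sum]; ring
  | cast j => simp [extendFreq_castSucc, Pi.single_apply]

theorem sum_mul_sub_last (y : Fin n → ℝ) (v : Fin (n + 1) → ℝ) :
    ∑ i, y i * (v i.castSucc - v (Fin.last n)) =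
      extendFreq (n + 1) y ⬝ᵥ v - v (Fin.last n) := by
  simp only [dotProduct, Fin.sum_univ_castSucc, extendFreq_castSucc, extendFreq_last,
    mul_sub, Finset.sum_sub_distrib, ← Finset.sum_mul]
  ring

theorem hasLineDerivAt_meanFit {σ : Fin (n + 1) → Fin (n + 1) → ℝ} (hσ : Matrix.IsSymm σ)
    (y : Fin n → ℝ) (i : Fin n) :
    HasLineDerivAt ℝ (meanFit (n + 1) σ)
      (2 * (margFit (n + 1) σ y i.castSucc - margFit (n + 1) σ y (Fin.last n))) y
      (Pi.single i 1) := by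
  have hline : (fun t : ℝ => meanFit (n + 1) σ (y + t • Pi.single i 1)) =
      fun t => (extendFreq (n + 1) y + t • (Pi.single i.castSucc 1 - Pi.single (Fin.last n) 1)) ⬝ᵥ
        σ *ᵥ (extendFreq (n + 1) y + t • (Pi.single i.castSucc 1 - Pi.single (Fin.last n) 1)) := by
    ext t
    rw [meanFit_eq_dotProduct, margFit_eq_mulVec, extendFreq_add_smul_single]
  have h := hσ.hasDerivAt_dotProduct_mulVec_line (extendFreq (n + 1) y)
    (Pi.single i.castSucc 1 - Pi.single (Fin.last n) 1)
  rwa [sub_dotProduct, single_one_dotProduct, single_one_dotProduct, ← hline] at h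

theorem pd_exp_neg_meanFit_div_two {σ : Fin (n + 1) → Fin (n + 1) → ℝ} (hσ : Matrix.IsSymm σ)
    (y : Fin n → ℝ) (i : Fin n) :
    pd (n + 1) (fun z => Real.exp (-meanFit (n + 1) σ z / 2)) i y =
      -Real.exp (-meanFit (n + 1) σ y / 2) *
        (margFit (n + 1) σ y i.castSucc - margFit (n + 1) σ y (Fin.last n)) := by
  have h : HasLineDerivAt ℝ (fun z => Real.exp (-meanFit (n + 1) σ z / 2))
      (Real.exp (-meanFit (n + 1) σ y / 2) *
        (-(2 * (margFit (n + 1) σ y i.castSucc - margFit (n + 1) σ y (Fin.last n))) / 2))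
      y (Pi.single i 1) := by
    have h0 := hasLineDerivAt_meanFit hσ y i
    unfold HasLineDerivAt at h0 ⊢
    simpa only [zero_smul, add_zero] using (h0.fun_neg.div_const 2).exp
  rw [pd, ← DifferentiableAt.lineDeriv_eq_fderiv (by fun_prop), h.lineDeriv]
  ring

theorem idx_succ (i : Fin n) : idx (n + 1) i = i.castSucc := rfl

end SimplexCoordinates

/-- Appendix D, cancellation identity: for any `C¹` function `f` on the
interior of the simplex, the cross term between the diffusion coefficient applied to
`e^{-σ̄/2}` and `f` cancels the selection drift term. -/
theorem cross_term_cancellation (K : ℕ) (σ : Fin K → Fin K → ℝ)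
    (hσ : ∀ i j, σ i j = σ j i)
    (f : (Fin (K - 1) → ℝ) → ℝ)
    (x : Fin (K - 1) → ℝ) :
    (∑ i, ∑ j, x i * ((if i = j then (1 : ℝ) else 0) - x j) *
        pd K (fun y => Real.exp (-meanFit K σ y / 2)) i x * pd K f j x) +
      Real.exp (-meanFit K σ x / 2) *
        ∑ i, x i * (margFit K σ x (idx K i) - meanFit K σ x) * pd K f i x = 0 := by
  rcases K with _ | n
  · simp
  -- `hpd` and `hdrift` restate lemmas over `Fin (n + 1 - 1)`, the index type of the goal,
  -- which `simp` and `rw` do not identify with `Fin n`.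
  have hpd : ∀ i, pd (n + 1) (fun y => Real.exp (-meanFit (n + 1) σ y / 2)) i x =
      -Real.exp (-meanFit (n + 1) σ x / 2) *
        (margFit (n + 1) σ x (idx (n + 1) i) - margFit (n + 1) σ x (Fin.last n)) :=
    pd_exp_neg_meanFit_div_two (Matrix.IsSymm.ext fun i j => hσ j i) x
  have hdrift : ∑ i, x i * (-Real.exp (-meanFit (n + 1) σ x / 2) *
        (margFit (n + 1) σ x (idx (n + 1) i) - margFit (n + 1) σ x (Fin.last n))) =
      -Real.exp (-meanFit (n + 1) σ x / 2) *
        (meanFit (n + 1) σ x - margFit (n + 1) σ x (Fin.last n)) := by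
    have h := sum_mul_sub_last (n := n) x (margFit (n + 1) σ x)
    rw [← meanFit_eq_dotProduct] at h
    rw [← h, Finset.mul_sum]
    exact Finset.sum_congr rfl fun i _ => by rw [idx_succ]; ring
  rw [sum_sum_mul_ite_sub_mul]
  simp only [hpd]
  rw [hdrift, Finset.mul_sum, ← Finset.sum_add_distrib]
  exact Finset.sum_eq_zero fun i _ => by ring
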